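/- Let ℓ((W_j)) = ℓ₀(W_{H+1:1}) with ℓ₀ differentiable, and suppose (Ŵ_j)_{j=1}^{H+1} is a critical point of ℓ such that for some j* ∈ [H+1], the product Ŵ_{H+1:j*+1} has full row rank and Ŵ_{j*-1:1} has full column rank. Then ∇ℓ₀(Ŵ_{H+1:1}) = 0; moreover, if (Ŵ_j) is a local minimum of ℓ then Ŵ_{H+1:1} is a local minimum of ℓ₀ (and analogously for local maxima). -/

import Mathlib

open Matrix

attribute [local instance] Matrix.frobeniusNormedAddCommGroup Matrix.frobeniusNormedSpace

/-- `segProd d W a b` is the matrix product `W (b-1) * ⋯ * W a`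
(the identity when `a = b`, junk when `b < a`). -/
noncomputable def segProd (d : ℕ → ℕ)
    (W : ∀ j : ℕ, Matrix (Fin (d (j + 1))) (Fin (d j)) ℝ) (a : ℕ) :
    (b : ℕ) → Matrix (Fin (d b)) (Fin (d a)) ℝ
  | 0 => if h : a = 0 then by subst h; exact 1 else 0
  | b + 1 => if h : a = b + 1 then by subst h; exact 1 else W b * segProd d W a b

lemma segProd_self (d : ℕ → ℕ) (W : ∀ j : ℕ, Matrix (Fin (d (j + 1))) (Fin (d j)) ℝ)
    (a : ℕ) : segProd d W a a = 1 := by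
  cases a with
  | zero => simp [segProd]
  | succ b => simp [segProd]

lemma segProd_succ (d : ℕ → ℕ) (W : ∀ j : ℕ, Matrix (Fin (d (j + 1))) (Fin (d j)) ℝ)
    {a b : ℕ} (h : a ≠ b + 1) : segProd d W a (b + 1) = W b * segProd d W a b := by
  simp [segProd, h]

lemma segProd_junk (d : ℕ → ℕ) (W : ∀ j : ℕ, Matrix (Fin (d (j + 1))) (Fin (d j)) ℝ)
    (a : ℕ) : ∀ b : ℕ, b < a → segProd d W a b = 0 := by
  intro b
  induction b with
  | zero => intro h; simp [segProd]; omega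
  | succ b ih =>
    intro h
    rw [segProd_succ d W (by omega), ih (by omega), Matrix.mul_zero]

lemma segProd_congr (d : ℕ → ℕ) {W W' : ∀ j : ℕ, Matrix (Fin (d (j + 1))) (Fin (d j)) ℝ}
    (a : ℕ) : ∀ b : ℕ, (∀ k, a ≤ k → k < b → W' k = W k) →
      segProd d W' a b = segProd d W a b := by
  intro b
  induction b with
  | zero => intro _; simp [segProd]
  | succ b ih =>
    intro h
    by_cases hab : a = b + 1
    · subst hab; simp [segProd_self]
    · rw [segProd_succ d _ hab, segProd_succ d _ hab,
        ih (fun k hk1 hk2 => h k hk1 (Nat.lt_succ_of_lt hk2))]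
      by_cases hab2 : a ≤ b
      · rw [h b hab2 (Nat.lt_succ_self b)]
      · rw [segProd_junk d W a b (by omega), Matrix.mul_zero, Matrix.mul_zero]

lemma segProd_split (d : ℕ → ℕ) (W : ∀ j : ℕ, Matrix (Fin (d (j + 1))) (Fin (d j)) ℝ)
    {a m : ℕ} (ham : a ≤ m) : ∀ b : ℕ, m ≤ b →
      segProd d W a b = segProd d W m b * segProd d W a m := by
  intro b
  induction b with
  | zero =>
    intro hb
    have hm : m = 0 := Nat.le_zero.mp hb
    subst hm
    have ha : a = 0 := Nat.le_zero.mp ham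
    subst ha
    simp [segProd_self]
  | succ b ih =>
    intro hb
    by_cases hmb : m = b + 1
    · subst hmb; rw [segProd_self]; simp
    · have hmb' : m ≤ b := Nat.lt_succ_iff.mp (lt_of_le_of_ne hb hmb)
      have hab : a ≠ b + 1 := by omega
      rw [segProd_succ d W hab, segProd_succ d W hmb, ih hmb', Matrix.mul_assoc]

/-- Decomposition of the full product after updating layer `j`. -/
lemma segProd_update (d : ℕ → ℕ) (W : ∀ j : ℕ, Matrix (Fin (d (j + 1))) (Fin (d j)) ℝ)
    {j H : ℕ} (hj : j ≤ H) (X : Matrix (Fin (d (j + 1))) (Fin (d j)) ℝ) :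
    segProd d (Function.update W j X) 0 (H + 1)
      = segProd d W (j + 1) (H + 1) * X * segProd d W 0 j := by
  set W' := Function.update W j X with hW'
  have h1 : segProd d W' 0 (H + 1) = segProd d W' (j + 1) (H + 1) * segProd d W' 0 (j + 1) :=
    segProd_split d W' (m := j + 1) (Nat.zero_le _) (H + 1) (by omega)
  have h2 : segProd d W' 0 (j + 1) = W' j * segProd d W' 0 j :=
    segProd_succ d W' (by omega)
  have h3 : segProd d W' (j + 1) (H + 1) = segProd d W (j + 1) (H + 1) :=
    segProd_congr d (j + 1) (H + 1)
      (fun k hk1 _ => Function.update_of_ne (by omega : k ≠ j) X W)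
  have h4 : segProd d W' 0 j = segProd d W 0 j :=
    segProd_congr d 0 j (fun k _ hk2 => Function.update_of_ne (by omega : k ≠ j) X W)
  have h5 : W' j = X := Function.update_self j X W
  rw [h1, h2, h3, h4, h5, Matrix.mul_assoc]

lemma segProd_eq (d : ℕ → ℕ) (W : ∀ j : ℕ, Matrix (Fin (d (j + 1))) (Fin (d j)) ℝ)
    {j H : ℕ} (hj : j ≤ H) :
    segProd d W 0 (H + 1) = segProd d W (j + 1) (H + 1) * W j * segProd d W 0 j := by
  have := segProd_update d W hj (W j)
  rwa [Function.update_eq_self] at this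

/-- A matrix of full row rank has a right inverse. -/
lemma exists_right_inverse_of_rank {m n : ℕ} (M : Matrix (Fin m) (Fin n) ℝ)
    (h : M.rank = m) : ∃ N : Matrix (Fin n) (Fin m) ℝ, M * N = 1 := by
  have h1 : (M * Mᵀ).rank = m := by rw [Matrix.rank_self_mul_transpose, h]
  have hsurj : Function.Surjective (M * Mᵀ).mulVecLin := by
    rw [← LinearMap.range_eq_top]
    apply Submodule.eq_top_of_finrank_eq
    rw [Matrix.rank] at h1
    rw [h1, Module.finrank_pi, Fintype.card_fin]
  have hunit : IsUnit (M * Mᵀ) := Matrix.mulVec_surjective_iff_isUnit.mp hsurj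
  have hdet : IsUnit (M * Mᵀ).det := (Matrix.isUnit_iff_isUnit_det _).mp hunit
  refine ⟨Mᵀ * (M * Mᵀ)⁻¹, ?_⟩
  rw [← Matrix.mul_assoc, Matrix.mul_nonsing_inv _ hdet]

/-- A matrix of full column rank has a left inverse. -/
lemma exists_left_inverse_of_rank {m n : ℕ} (M : Matrix (Fin m) (Fin n) ℝ)
    (h : M.rank = n) : ∃ N : Matrix (Fin n) (Fin m) ℝ, N * M = 1 := by
  obtain ⟨N, hN⟩ := exists_right_inverse_of_rank Mᵀ (by rw [Matrix.rank_transpose, h])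
  refine ⟨Nᵀ, ?_⟩
  have := congrArg Matrix.transpose hN
  rwa [Matrix.transpose_mul, Matrix.transpose_transpose, Matrix.transpose_one] at this

/-- Local extremum transfer along the parametrization `W' ↦ segProd d W' 0 (H+1)`. -/
lemma transfer_aux (H : ℕ) (d : ℕ → ℕ)
    (What : ∀ j : ℕ, Matrix (Fin (d (j + 1))) (Fin (d j)) ℝ)
    (jstar : ℕ) (hjstar : jstar ≤ H)
    (A' : Matrix (Fin (d (jstar + 1))) (Fin (d (H + 1))) ℝ)
    (B' : Matrix (Fin (d 0)) (Fin (d jstar)) ℝ)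
    (hA : segProd d What (jstar + 1) (H + 1) * A' = 1)
    (hB : B' * segProd d What 0 jstar = 1)
    (Q : Matrix (Fin (d (H + 1))) (Fin (d 0)) ℝ → Prop)
    (hyp : ∃ ε > (0 : ℝ), ∀ W' : ∀ j : ℕ, Matrix (Fin (d (j + 1))) (Fin (d j)) ℝ,
      (∀ j ≤ H, ∀ i k, |W' j i k - What j i k| ≤ ε) → Q (segProd d W' 0 (H + 1))) :
    ∃ ε > (0 : ℝ), ∀ R, (∀ i k, |R i k - segProd d What 0 (H + 1) i k| ≤ ε) → Q R := by
  obtain ⟨ε, hε, hyp⟩ := hyp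
  set A := segProd d What (jstar + 1) (H + 1) with hAdef
  set B := segProd d What 0 jstar with hBdef
  set P := segProd d What 0 (H + 1) with hPdef
  set SA : ℝ := ∑ i, ∑ p, |A' i p| with hSAdef
  set SB : ℝ := ∑ q, ∑ k, |B' q k| with hSBdef
  have hSA : (0 : ℝ) ≤ SA :=
    Finset.sum_nonneg fun _ _ => Finset.sum_nonneg fun _ _ => abs_nonneg _
  have hSB : (0 : ℝ) ≤ SB :=
    Finset.sum_nonneg fun _ _ => Finset.sum_nonneg fun _ _ => abs_nonneg _
  set C : ℝ := SA * SB + 1 with hCdef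
  have hC0 : (0 : ℝ) < C := by positivity
  refine ⟨ε / C, div_pos hε hC0, ?_⟩
  intro R hR
  set M := R - P with hMdef
  have hM : ∀ p q, |M p q| ≤ ε / C := by
    intro p q
    have := hR p q
    simpa [hMdef, Matrix.sub_apply] using this
  set X := What jstar + A' * M * B' with hXdef
  set W' := Function.update What jstar X with hW'def
  have hclose : ∀ j ≤ H, ∀ i k, |W' j i k - What j i k| ≤ ε := by
    intro j hj i k
    rcases eq_or_ne j jstar with hjj | hjj
    · subst hjj
      have hXW : W' j = X := by rw [hW'def]; exact Function.update_self j X What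
      rw [hXW]
      have hsub : X i k - What j i k = (A' * M * B') i k := by
        simp [hXdef, Matrix.add_apply]
      rw [hsub]
      have ht0 : (0 : ℝ) ≤ ε / C := le_of_lt (div_pos hε hC0)
      calc |(A' * M * B') i k|
          = |∑ q, (∑ p, A' i p * M p q) * B' q k| := by
            simp [Matrix.mul_apply]
        _ ≤ ∑ q, |(∑ p, A' i p * M p q) * B' q k| := Finset.abs_sum_le_sum_abs _ _
        _ ≤ ∑ q, (∑ p, |A' i p| * (ε / C)) * |B' q k| := by
            refine Finset.sum_le_sum fun q _ => ?_
            rw [abs_mul]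
            refine mul_le_mul_of_nonneg_right ?_ (abs_nonneg _)
            calc |∑ p, A' i p * M p q| ≤ ∑ p, |A' i p * M p q| :=
                  Finset.abs_sum_le_sum_abs _ _
              _ ≤ ∑ p, |A' i p| * (ε / C) := Finset.sum_le_sum fun p _ => by
                  rw [abs_mul]
                  exact mul_le_mul_of_nonneg_left (hM p q) (abs_nonneg _)
        _ = (∑ p, |A' i p|) * (ε / C) * ∑ q, |B' q k| := by
            rw [Finset.sum_mul, Finset.mul_sum]
        _ ≤ SA * (ε / C) * SB := by
            have h1 : (∑ p, |A' i p|) ≤ SA := by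
              rw [hSAdef]
              exact Finset.single_le_sum
                (f := fun i' => ∑ p, |A' i' p|)
                (fun i' _ => Finset.sum_nonneg fun _ _ => abs_nonneg _)
                (Finset.mem_univ i)
            have h2 : (∑ q, |B' q k|) ≤ SB := by
              rw [hSBdef, Finset.sum_comm]
              exact Finset.single_le_sum
                (f := fun k' => ∑ q, |B' q k'|)
                (fun k' _ => Finset.sum_nonneg fun _ _ => abs_nonneg _)
                (Finset.mem_univ k)
            have hnn1 : (0 : ℝ) ≤ ∑ q, |B' q k| :=
              Finset.sum_nonneg fun _ _ => abs_nonneg _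
            exact mul_le_mul (mul_le_mul_of_nonneg_right h1 ht0) h2 hnn1
              (mul_nonneg hSA ht0)
        _ = (ε / C) * (SA * SB) := by ring
        _ ≤ (ε / C) * C := by
            refine mul_le_mul_of_nonneg_left ?_ ht0
            rw [hCdef]; linarith
        _ = ε := div_mul_cancel₀ ε (ne_of_gt hC0)
    · have : W' j = What j := by
        rw [hW'def]; exact Function.update_of_ne hjj X What
      rw [this]
      simp [le_of_lt hε]
  have hmid : A * (A' * M * B') * B = M := by
    calc A * (A' * M * B') * B = (A * A') * M * (B' * B) := by
          simp only [Matrix.mul_assoc]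
      _ = M := by rw [hA, hB, Matrix.one_mul, Matrix.mul_one]
  have h1 : A * What jstar * B = P := (segProd_eq d What hjstar).symm
  have hprod : segProd d W' 0 (H + 1) = R := by
    have e1 : segProd d W' 0 (H + 1) = A * X * B := by
      rw [hW'def]; exact segProd_update d What hjstar X
    rw [e1, hXdef, Matrix.mul_add, Matrix.add_mul, hmid, h1, hMdef]
    exact add_sub_cancel P R
  have := hyp W' hclose
  rwa [hprod] at this

/-- Theorem 3, Parts 3 and 3(a): at a critical point whose upper product has full
row rank and whose lower product has full column rank, the gradient of `ℓ₀`
vanishes at the total product, and local min/max of `ℓ` transfers to `ℓ₀`. -/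
theorem stmt19 (H : ℕ) (d : ℕ → ℕ)
    (ℓ₀ : Matrix (Fin (d (H + 1))) (Fin (d 0)) ℝ → ℝ)
    (hdiff : Differentiable ℝ ℓ₀)
    (What : ∀ j : ℕ, Matrix (Fin (d (j + 1))) (Fin (d j)) ℝ)
    (hcrit : ∀ j ≤ H, ∀ V : Matrix (Fin (d (j + 1))) (Fin (d j)) ℝ,
      deriv (fun t : ℝ =>
        ℓ₀ (segProd d (Function.update What j (What j + t • V)) 0 (H + 1))) 0 = 0)
    (jstar : ℕ) (hjstar : jstar ≤ H)
    (hrowA : (segProd d What (jstar + 1) (H + 1)).rank = d (H + 1))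
    (hcolB : (segProd d What 0 jstar).rank = d 0) :
    fderiv ℝ ℓ₀ (segProd d What 0 (H + 1)) = 0 ∧
    ((∃ ε > (0 : ℝ), ∀ W' : ∀ j : ℕ, Matrix (Fin (d (j + 1))) (Fin (d j)) ℝ,
        (∀ j ≤ H, ∀ i k, |W' j i k - What j i k| ≤ ε) →
        ℓ₀ (segProd d What 0 (H + 1)) ≤ ℓ₀ (segProd d W' 0 (H + 1))) →
      ∃ ε > (0 : ℝ), ∀ R, (∀ i k, |R i k - segProd d What 0 (H + 1) i k| ≤ ε) →
        ℓ₀ (segProd d What 0 (H + 1)) ≤ ℓ₀ R) ∧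
    ((∃ ε > (0 : ℝ), ∀ W' : ∀ j : ℕ, Matrix (Fin (d (j + 1))) (Fin (d j)) ℝ,
        (∀ j ≤ H, ∀ i k, |W' j i k - What j i k| ≤ ε) →
        ℓ₀ (segProd d W' 0 (H + 1)) ≤ ℓ₀ (segProd d What 0 (H + 1))) →
      ∃ ε > (0 : ℝ), ∀ R, (∀ i k, |R i k - segProd d What 0 (H + 1) i k| ≤ ε) →
        ℓ₀ R ≤ ℓ₀ (segProd d What 0 (H + 1))) := by
  obtain ⟨A', hA⟩ := exists_right_inverse_of_rank _ hrowA
  obtain ⟨B', hB⟩ := exists_left_inverse_of_rank _ hcolB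
  set A := segProd d What (jstar + 1) (H + 1) with hAdef
  set B := segProd d What 0 jstar with hBdef
  set P := segProd d What 0 (H + 1) with hPdef
  have h1 : A * What jstar * B = P := (segProd_eq d What hjstar).symm
  have hzero : ∀ V : Matrix (Fin (d (jstar + 1))) (Fin (d jstar)) ℝ,
      fderiv ℝ ℓ₀ P (A * V * B) = 0 := by
    intro V
    have hd := hcrit jstar hjstar V
    have key : (fun t : ℝ =>
        ℓ₀ (segProd d (Function.update What jstar (What jstar + t • V)) 0 (H + 1)))
        = fun t : ℝ => ℓ₀ (P + t • (A * V * B)) := by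
      funext t
      congr 1
      have e1 : segProd d (Function.update What jstar (What jstar + t • V)) 0 (H + 1)
          = A * (What jstar + t • V) * B := segProd_update d What hjstar _
      rw [e1, Matrix.mul_add, Matrix.add_mul, h1]
      congr 1
      rw [Matrix.mul_smul, Matrix.smul_mul]
    rw [key] at hd
    have hder : HasDerivAt (fun t : ℝ => P + t • (A * V * B)) (A * V * B) 0 := by
      exact (((hasDerivAt_id (0 : ℝ)).smul_const (A * V * B)).const_add P).congr_deriv (one_smul _ _)
    have h0 : P + (0 : ℝ) • (A * V * B) = P := by simp
    have hcomp : HasDerivAt (fun t : ℝ => ℓ₀ (P + t • (A * V * B)))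
        (fderiv ℝ ℓ₀ P (A * V * B)) 0 := by
      have := HasFDerivAt.comp_hasDerivAt (0 : ℝ) (h0 ▸ (hdiff P).hasFDerivAt) hder
      rw [h0] at this
      exact this
    rw [← hcomp.deriv]
    exact hd
  have hgrad : fderiv ℝ ℓ₀ P = 0 := by
    refine ContinuousLinearMap.ext fun R => ?_
    have hRdecomp : A * (A' * R * B') * B = R := by
      calc A * (A' * R * B') * B = (A * A') * R * (B' * B) := by
            simp only [Matrix.mul_assoc]
        _ = R := by rw [hA, hB, Matrix.one_mul, Matrix.mul_one]
    have := hzero (A' * R * B')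
    rw [hRdecomp] at this
    simpa using this
  refine ⟨hgrad, ?_, ?_⟩
  · exact fun hyp => transfer_aux H d What jstar hjstar A' B' hA hB
      (fun R => ℓ₀ P ≤ ℓ₀ R) hyp
  · exact fun hyp => transfer_aux H d What jstar hjstar A' B' hA hB
      (fun R => ℓ₀ R ≤ ℓ₀ P) hyp
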